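/- Let g be a real constant, c ≠ 0 a real constant, z_b : ℝ × ℝ → ℝ differentiable, and h, u, v, w, σ, p̄, p_b : ℝ × ℝ → ℝ → ℝ continuously differentiable functions of (x,y,t). Assume that at every point the two-dimensional hyperbolic SGN system holds: (i) ∂_t h + ∂_x(h·u) + ∂_y(h·v) = 0; (ii) ∂_t(h·u) + ∂_x(h·u² + h·p̄) + ∂_y(h·v·u) + g·h·∂_x h + (g·h + p_b)·∂_x z_b = 0; (iii) ∂_t(h·v) + ∂_x(h·u·v) + ∂_y(h·v² + h·p̄) + g·h·∂_y h + (g·h + p_b)·∂_y z_b = 0; (iv) ∂_t(h·w) + ∂_x(h·u·w) + ∂_y(h·v·w) = p_b; (v) ∂_t(h·σ) + ∂_x(h·u·σ) + ∂_y(h·v·σ) = −6·p_b + 12·p̄; (vi) ∂_t(h·p̄) + ∂_x[h·u·(p̄ + c²)] + ∂_y[h·v·(p̄ + c²)] − c²·u·∂_x h − c²·v·∂_y h = −c²·σ; (vii) ∂_t(h·p_b) + ∂_x(h·u·p_b) + ∂_y(h·v·p_b) − 6·c²·u·∂_x z_b − 6·c²·v·∂_y z_b = −6·c²·(w − σ/2).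 Define E := (h/2)·(u² + v² + w² + g·(h + 2·z_b) + σ²/12 + p̄²/c² + p_b²/(6·c²)). Then at every point: ∂_t E + ∂_x[u·(E + g·h²/2 + h·p̄)] + ∂_y[v·(E + g·h²/2 + h·p̄)] = 0. -/

import Mathlib

/-- Partial derivative with respect to the first space argument. -/
noncomputable def pdx (f : ℝ × ℝ → ℝ → ℝ) (x y t : ℝ) : ℝ :=
  deriv (fun x' => f (x', y) t) x

/-- Partial derivative with respect to the second space argument. -/
noncomputable def pdy (f : ℝ × ℝ → ℝ → ℝ) (x y t : ℝ) : ℝ :=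
  deriv (fun y' => f (x, y') t) y

/-- Partial derivative with respect to the time argument. -/
noncomputable def pdt (f : ℝ × ℝ → ℝ → ℝ) (x y t : ℝ) : ℝ :=
  deriv (fun t' => f (x, y) t') t

/-!
The energy law is the sum of the seven balance laws weighted by the entropy variables, the
partial derivatives of `E` with respect to the conserved quantities `h, hu, hv, hw, hσ, hp̄, hp_b`:
`u, v, w, σ/12, p̄/c², p_b/(6c²)` and, for the mass equation,
`g (h + z_b) - (u² + v² + w² + σ²/12 + p̄²/c² + p_b²/(6c²))/2`.
With these weights the relaxation sources cancel, `w p_b + σ (12 p̄ - 6 p_b)/12 - p̄ σ - p_b (w - σ/2) = 0`,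
and the remaining products recombine into the divergence of the energy flux. Once every partial
derivative is expanded by the Leibniz rule, the identity is thus a linear combination of the hypotheses.
-/

theorem stmt_15 (g c : ℝ) (hc : c ≠ 0)
    (zb : ℝ × ℝ → ℝ) (hzb : Differentiable ℝ zb)
    (h u v w sg pbar pb : ℝ × ℝ → ℝ → ℝ)
    (hh : ContDiff ℝ 1 (fun p : (ℝ × ℝ) × ℝ => h p.1 p.2))
    (hu : ContDiff ℝ 1 (fun p : (ℝ × ℝ) × ℝ => u p.1 p.2))
    (hv : ContDiff ℝ 1 (fun p : (ℝ × ℝ) × ℝ => v p.1 p.2))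
    (hw : ContDiff ℝ 1 (fun p : (ℝ × ℝ) × ℝ => w p.1 p.2))
    (hsg : ContDiff ℝ 1 (fun p : (ℝ × ℝ) × ℝ => sg p.1 p.2))
    (hpbar : ContDiff ℝ 1 (fun p : (ℝ × ℝ) × ℝ => pbar p.1 p.2))
    (hpb : ContDiff ℝ 1 (fun p : (ℝ × ℝ) × ℝ => pb p.1 p.2))
    (mass : ∀ x y t : ℝ,
      pdt h x y t + pdx (fun q t => h q t * u q t) x y t
        + pdy (fun q t => h q t * v q t) x y t = 0)
    (momx : ∀ x y t : ℝ,
      pdt (fun q t => h q t * u q t) x y t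
        + pdx (fun q t => h q t * (u q t) ^ 2 + h q t * pbar q t) x y t
        + pdy (fun q t => h q t * v q t * u q t) x y t
        + g * h (x, y) t * pdx h x y t
        + (g * h (x, y) t + pb (x, y) t) * deriv (fun x' => zb (x', y)) x = 0)
    (momy : ∀ x y t : ℝ,
      pdt (fun q t => h q t * v q t) x y t
        + pdx (fun q t => h q t * u q t * v q t) x y t
        + pdy (fun q t => h q t * (v q t) ^ 2 + h q t * pbar q t) x y t
        + g * h (x, y) t * pdy h x y t
        + (g * h (x, y) t + pb (x, y) t) * deriv (fun y' => zb (x, y')) y = 0)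
    (momz : ∀ x y t : ℝ,
      pdt (fun q t => h q t * w q t) x y t
        + pdx (fun q t => h q t * u q t * w q t) x y t
        + pdy (fun q t => h q t * v q t * w q t) x y t = pb (x, y) t)
    (sigmaEvol : ∀ x y t : ℝ,
      pdt (fun q t => h q t * sg q t) x y t
        + pdx (fun q t => h q t * u q t * sg q t) x y t
        + pdy (fun q t => h q t * v q t * sg q t) x y t
      = -6 * pb (x, y) t + 12 * pbar (x, y) t)
    (pEvol : ∀ x y t : ℝ,
      pdt (fun q t => h q t * pbar q t) x y t
        + pdx (fun q t => h q t * u q t * (pbar q t + c ^ 2)) x y t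
        + pdy (fun q t => h q t * v q t * (pbar q t + c ^ 2)) x y t
        - c ^ 2 * u (x, y) t * pdx h x y t
        - c ^ 2 * v (x, y) t * pdy h x y t
      = -(c ^ 2) * sg (x, y) t)
    (pbEvol : ∀ x y t : ℝ,
      pdt (fun q t => h q t * pb q t) x y t
        + pdx (fun q t => h q t * u q t * pb q t) x y t
        + pdy (fun q t => h q t * v q t * pb q t) x y t
        - 6 * c ^ 2 * u (x, y) t * deriv (fun x' => zb (x', y)) x
        - 6 * c ^ 2 * v (x, y) t * deriv (fun y' => zb (x, y')) y
      = -(6 * c ^ 2) * (w (x, y) t - sg (x, y) t / 2)) :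
    ∀ x y t : ℝ,
      pdt (fun q t => h q t / 2 *
          ((u q t) ^ 2 + (v q t) ^ 2 + (w q t) ^ 2 + g * (h q t + 2 * zb q)
            + (sg q t) ^ 2 / 12 + (pbar q t) ^ 2 / c ^ 2
            + (pb q t) ^ 2 / (6 * c ^ 2))) x y t
        + pdx (fun q t =>
            u q t * (h q t / 2 *
                ((u q t) ^ 2 + (v q t) ^ 2 + (w q t) ^ 2 + g * (h q t + 2 * zb q)
                  + (sg q t) ^ 2 / 12 + (pbar q t) ^ 2 / c ^ 2
                  + (pb q t) ^ 2 / (6 * c ^ 2))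
              + g * (h q t) ^ 2 / 2 + h q t * pbar q t)) x y t
        + pdy (fun q t =>
            v q t * (h q t / 2 *
                ((u q t) ^ 2 + (v q t) ^ 2 + (w q t) ^ 2 + g * (h q t + 2 * zb q)
                  + (sg q t) ^ 2 / 12 + (pbar q t) ^ 2 / c ^ 2
                  + (pb q t) ^ 2 / (6 * c ^ 2))
              + g * (h q t) ^ 2 / 2 + h q t * pbar q t)) x y t = 0 := by
  intro x y t
  replace hh := hh.differentiable one_ne_zero
  replace hu := hu.differentiable one_ne_zero
  replace hv := hv.differentiable one_ne_zero
  replace hw := hw.differentiable one_ne_zero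
  replace hsg := hsg.differentiable one_ne_zero
  replace hpbar := hpbar.differentiable one_ne_zero
  replace hpb := hpb.differentiable one_ne_zero
  simp only [pdt, pdx, pdy] at *
  simp (disch := fun_prop) only [deriv_fun_mul, deriv_fun_add, deriv_fun_pow, deriv_div_const,
    deriv_const] at *
  linear_combination (norm := (field_simp; ring1))
    u (x, y) t * momx x y t + v (x, y) t * momy x y t + w (x, y) t * momz x y t
      + sg (x, y) t / 12 * sigmaEvol x y t + pbar (x, y) t / c ^ 2 * pEvol x y t
      + pb (x, y) t / (6 * c ^ 2) * pbEvol x y t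
      + (g * (h (x, y) t + zb (x, y))
          - (u (x, y) t ^ 2 + v (x, y) t ^ 2 + w (x, y) t ^ 2 + sg (x, y) t ^ 2 / 12
            + pbar (x, y) t ^ 2 / c ^ 2 + pb (x, y) t ^ 2 / (6 * c ^ 2)) / 2) * mass x y t
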